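/- Let A be the 4-dimensional commutative ℂ-algebra with basis e₁, e₂, e₃, e₄ and nonzero products e₁e₁ = e₂ and e₂e₂ = e₃ (all other products of basis vectors are zero). Then a symmetric bilinear form θ : A × A → ℂ belongs to B²(A, ℂ) if and only if θ(eᵢ, eⱼ) = 0 for all pairs (i, j) with i ≤ j other than (1,1) and (2,2). Consequently H²(A, ℂ) = Z²(A, ℂ)/B²(A, ℂ) has dimension 8. -/

import Mathlib

noncomputable section

open scoped Matrix

/-- The multiplication of the 4-dimensional commutative algebra with
`e₁e₁ = e₂`, `e₂e₂ = e₃` (all other products of basis vectors zero),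
on the carrier `Fin 4 → ℂ`. -/
def mulB (u v : Fin 4 → ℂ) : Fin 4 → ℂ :=
  ![0, u 0 * v 0, u 1 * v 1, 0]

/-- `Z²(A, ℂ)`, the space of symmetric bilinear forms on `A`, realized as the space of
symmetric `4 × 4` matrices (the Gram matrix of a form; the form attached to a matrix `M`
is `(u, v) ↦ u ⬝ᵥ M *ᵥ v`). -/
def Z2 : Submodule ℂ (Matrix (Fin 4) (Fin 4) ℂ) where
  carrier := {M | ∀ i j, M i j = M j i}
  add_mem' := by
    intro a b ha hb i j
    simp [Matrix.add_apply, ha i j, hb i j]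
  zero_mem' := by intro i j; simp
  smul_mem' := by
    intro c M hM i j
    simp [Matrix.smul_apply, hM i j]

/-- `B²(A, ℂ)`: the matrices whose associated bilinear form is a coboundary
`δf(u, v) = f (uv)` for a linear functional `f`. -/
def B2 : Submodule ℂ (Matrix (Fin 4) (Fin 4) ℂ) where
  carrier :=
    {M | ∃ f : (Fin 4 → ℂ) →ₗ[ℂ] ℂ, ∀ u v : Fin 4 → ℂ, u ⬝ᵥ M.mulVec v = f (mulB u v)}
  add_mem' := by
    rintro a b ⟨f, hf⟩ ⟨g, hg⟩
    refine ⟨f + g, fun u v => ?_⟩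
    simp [Matrix.add_mulVec, dotProduct_add, hf u v, hg u v]
  zero_mem' := ⟨0, fun u v => by simp [Matrix.zero_mulVec]⟩
  smul_mem' := by
    rintro c M ⟨f, hf⟩
    refine ⟨c • f, fun u v => ?_⟩
    simp [Matrix.smul_mulVec, dotProduct_smul, hf u v]

/-- `B²(A, ℂ)` viewed inside `Z²(A, ℂ)`. -/
def B2' : Submodule ℂ Z2 := B2.comap Z2.subtype

/-- `H²(A, ℂ) = Z²(A, ℂ) / B²(A, ℂ)`. -/
abbrev H2 := Z2 ⧸ B2'

/-! Since `uv = u₁v₁ e₂ + u₂v₂ e₃`, the coboundary `δf` has Gram matrix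
`diag(f e₂, f e₃, 0, 0)`, so `B²` consists of exactly these diagonal matrices. A symmetric
matrix is such a diagonal matrix iff its eight remaining upper-triangular entries vanish, and
these eight entries give an isomorphism `Z²/B² ≃ ℂ⁸`. -/

open Matrix

theorem mulB_eq (u v : Fin 4 → ℂ) :
    mulB u v = (u 0 * v 0) • Pi.single 1 1 + (u 1 * v 1) • Pi.single 2 1 := by
  funext i; fin_cases i <;> simp [mulB]

theorem apply_mulB_eq_dotProduct (f : (Fin 4 → ℂ) →ₗ[ℂ] ℂ) (u v : Fin 4 → ℂ) :
    f (mulB u v) = u ⬝ᵥ diagonal ![f (Pi.single 1 1), f (Pi.single 2 1), 0, 0] *ᵥ v := by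
  simp only [mulB_eq, map_add, map_smul, smul_eq_mul, dotProduct, mulVec_diagonal,
    Fin.sum_univ_four, cons_val_zero, cons_val_one, cons_val, zero_mul, mul_zero, add_zero]
  ring

theorem mem_B2_iff {M : Matrix (Fin 4) (Fin 4) ℂ} :
    M ∈ B2 ↔ ∃ a b : ℂ, M = diagonal ![a, b, 0, 0] := by
  constructor
  · rintro ⟨f, hf⟩
    refine ⟨f (Pi.single 1 1), f (Pi.single 2 1), ?_⟩
    exact (toLinearMap₂' ℂ).injective <| LinearMap.ext₂ fun u v => by
      rw [toLinearMap₂'_apply', toLinearMap₂'_apply', hf, apply_mulB_eq_dotProduct]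
  · rintro ⟨a, b, rfl⟩
    refine ⟨a • LinearMap.proj 1 + b • LinearMap.proj 2, fun u v => ?_⟩
    rw [apply_mulB_eq_dotProduct]
    simp

theorem mem_B2_iff_of_symm {M : Matrix (Fin 4) (Fin 4) ℂ} (hM : ∀ i j, M i j = M j i) :
    M ∈ B2 ↔ M 0 1 = 0 ∧ M 0 2 = 0 ∧ M 0 3 = 0 ∧ M 1 2 = 0 ∧
      M 1 3 = 0 ∧ M 2 2 = 0 ∧ M 2 3 = 0 ∧ M 3 3 = 0 := by
  rw [mem_B2_iff]
  constructor
  · rintro ⟨a, b, rfl⟩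
    simp
  · rintro ⟨h01, h02, h03, h12, h13, h22, h23, h33⟩
    refine ⟨M 0 0, M 1 1, ?_⟩
    ext i j
    fin_cases i <;> fin_cases j <;> simp [hM 1 0, hM 2 0, hM 3 0, hM 2 1, hM 3 1, hM 3 2, *]

theorem exists_coboundary_iff_toMatrix₂'_mem_B2
    (θ : (Fin 4 → ℂ) →ₗ[ℂ] (Fin 4 → ℂ) →ₗ[ℂ] ℂ) :
    (∃ f : (Fin 4 → ℂ) →ₗ[ℂ] ℂ, ∀ u v, θ u v = f (mulB u v)) ↔
      LinearMap.toMatrix₂' ℂ θ ∈ B2 := by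
  conv_lhs => rw [← toLinearMap₂'_toMatrix' (R := ℂ) θ]
  simp only [toLinearMap₂'_apply']
  rfl

def h2Coords : Z2 →ₗ[ℂ] (Fin 8 → ℂ) where
  toFun M := ![M.1 0 1, M.1 0 2, M.1 0 3, M.1 1 2, M.1 1 3, M.1 2 2, M.1 2 3, M.1 3 3]
  map_add' _ _ := by funext i; fin_cases i <;> rfl
  map_smul' _ _ := by funext i; fin_cases i <;> rfl

theorem h2Coords_surjective : Function.Surjective h2Coords := by
  intro c
  refine ⟨⟨!![0, c 0, c 1, c 2; c 0, 0, c 3, c 4; c 1, c 3, c 5, c 6; c 2, c 4, c 6, c 7],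
    by intro i j; fin_cases i <;> fin_cases j <;> rfl⟩, ?_⟩
  funext i; fin_cases i <;> rfl

theorem ker_h2Coords : LinearMap.ker h2Coords = B2' := by
  ext ⟨M, hM⟩
  rw [LinearMap.mem_ker, B2', Submodule.mem_comap, Submodule.subtype_apply,
    mem_B2_iff_of_symm hM]
  simp [h2Coords]

/-- For the algebra `e₁e₁ = e₂, e₂e₂ = e₃` (on basis `e₁, e₂, e₃, e₄`): a symmetric
bilinear form `θ` belongs to `B²(A, ℂ)` iff `θ(eᵢ, eⱼ) = 0` for every pair `i ≤ j` other
than `(1,1)` and `(2,2)`; consequently `H²(A, ℂ) = Z²(A, ℂ)/B²(A, ℂ)` has dimension `8`. -/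
theorem stmt15 :
    (∀ θ : (Fin 4 → ℂ) →ₗ[ℂ] (Fin 4 → ℂ) →ₗ[ℂ] ℂ, (∀ u v, θ u v = θ v u) →
      ((∃ f : (Fin 4 → ℂ) →ₗ[ℂ] ℂ, ∀ u v, θ u v = f (mulB u v)) ↔
        (θ ![1,0,0,0] ![0,1,0,0] = 0 ∧ θ ![1,0,0,0] ![0,0,1,0] = 0 ∧
         θ ![1,0,0,0] ![0,0,0,1] = 0 ∧ θ ![0,1,0,0] ![0,0,1,0] = 0 ∧
         θ ![0,1,0,0] ![0,0,0,1] = 0 ∧ θ ![0,0,1,0] ![0,0,1,0] = 0 ∧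
         θ ![0,0,1,0] ![0,0,0,1] = 0 ∧ θ ![0,0,0,1] ![0,0,0,1] = 0))) ∧
    Module.finrank ℂ H2 = 8 := by
  refine ⟨fun θ hθ => ?_, ?_⟩
  · rw [exists_coboundary_iff_toMatrix₂'_mem_B2,
      mem_B2_iff_of_symm (M := LinearMap.toMatrix₂' ℂ θ) fun i j => hθ _ _]
    simp only [LinearMap.toMatrix₂'_apply]
    -- what remains is `Pi.single i 1 = ![…]` for the standard basis vectors
    apply iff_of_eq
    congr! <;> ext i <;> fin_cases i <;> simp
  · rw [((Submodule.quotEquivOfEq _ _ ker_h2Coords.symm).trans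
      (h2Coords.quotKerEquivOfSurjective h2Coords_surjective)).finrank_eq,
      Module.finrank_fin_fun]
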